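/- arXiv:1012.5901 — 2 statements merged into one kernel-verified Lean document; each statement's English description precedes it below -/
import Mathlib

section
/- Quantitative Riemann–Lebesgue lemma, case p = 1 (Remark 3 (i)): Let f ∈ L¹_A(ℝ₊) on the Jacobi hypergroup. Then there exists a positive constant c such that for every δ > 0, ess sup_{x > 1/δ} |𝓕(f)(x)| ≤ c ω_{A,1}(f)(δ). -/
open MeasureTheory Set Filter

/-- The `L^p` norm on `(0,∞)` with respect to the weighted measure `w(x) dx`. -/
noncomputable def wLpNorm (w : ℝ → ℝ) (p : ℝ) (f : ℝ → ℂ) : ℝ :=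
  (∫ x in Set.Ioi (0 : ℝ), ‖f x‖ ^ p * w x) ^ (1 / p)

/-- Membership in `L^p((0,∞), w(x) dx)`. -/
def MemW (w : ℝ → ℝ) (p : ℝ) (f : ℝ → ℂ) : Prop :=
  AEMeasurable f (volume.restrict (Set.Ioi (0 : ℝ))) ∧
    IntegrableOn (fun x => ‖f x‖ ^ p * w x) (Set.Ioi (0 : ℝ))

/-- The Jacobi hypergroup setting: the Chébli–Trimèche hypergroup `(ℝ₊, ∗(A))` with
`A(x) = 2^(2ρ) (sinh x)^(2α+1) (cosh x)^(2β+1)`, `α ≥ β ≥ -1/2`, `α ≠ -1/2`,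
`ρ = α + β + 1`.  Its characters are the Jacobi functions `φ_λ`, satisfying
`|1 - φ_λ(t)| ≥ c₀ min{1, (λt)²}`.  The density `cden = |c(λ)|⁻²` is even, continuous
and comparable to `|λ|^(2α+1)` for `|λ| > k` and to `|λ|²` for `|λ| ≤ k`.  The
generalized Fourier transform `FT` is given on `L¹_A` by
`𝓕(f)(λ) = ∫₀^∞ f(x) φ_λ(x) A(x) dx`; it satisfies `‖𝓕 f‖_∞ ≤ ‖f‖_{A,1}`, the
Hausdorff–Young inequality, the Hardy–Littlewood inequality of Lemma 1 and the
translation identity `𝓕(τ_δ f)(λ) = φ_λ(δ) 𝓕(f)(λ)`, where the generalized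
translations `τ_δ` are `L^p_A`-contractions. -/
structure JacobiHypergroup where
  α : ℝ
  β : ℝ
  ρ : ℝ
  hβα : β ≤ α
  hβ : -(1/2) ≤ β
  hα : α ≠ -(1/2)
  hρ : ρ = α + β + 1
  /-- the weight function `A` of the Jacobi hypergroup -/
  A : ℝ → ℝ
  hA : ∀ x : ℝ, 0 ≤ x →
    A x = (2 : ℝ) ^ (2 * ρ) * Real.sinh x ^ (2 * α + 1) * Real.cosh x ^ (2 * β + 1)
  /-- the Jacobi functions `φ_λ`, the characters of the hypergroup -/
  φ : ℝ → ℝ → ℂ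
  c₀ : ℝ
  hc₀ : 0 < c₀
  hφ_lower : ∀ lam t : ℝ, 0 < t →
    c₀ * min 1 ((lam * t) ^ 2) ≤ ‖1 - φ lam t‖
  /-- the density `|c(λ)|⁻²` of the Plancherel measure -/
  cden : ℝ → ℝ
  hcden_cont : Continuous cden
  hcden_even : ∀ x : ℝ, cden (-x) = cden x
  k : ℝ
  k₁ : ℝ
  k₂ : ℝ
  hk : 0 < k
  hk₁ : 0 < k₁
  hk₂ : 0 < k₂
  hcden_hi : ∀ x : ℝ, k < |x| →
    k₁ * |x| ^ (2 * α + 1) ≤ cden x ∧ cden x ≤ k₂ * |x| ^ (2 * α + 1)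
  hcden_lo : ∀ x : ℝ, |x| ≤ k →
    k₁ * |x| ^ (2 : ℝ) ≤ cden x ∧ cden x ≤ k₂ * |x| ^ (2 : ℝ)
  /-- the generalized Fourier transform -/
  FT : (ℝ → ℂ) → ℝ → ℂ
  hFT_def : ∀ f : ℝ → ℂ, MemW A 1 f → ∀ lam : ℝ,
    FT f lam = ∫ x in Set.Ioi (0 : ℝ), f x * φ lam x * (A x : ℂ)
  hFT_meas : ∀ f : ℝ → ℂ, Measurable (FT f)
  hFT_sub : ∀ f g : ℝ → ℂ, ∀ lam : ℝ,
    FT (fun y => f y - g y) lam = FT f lam - FT g lam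
  /-- `‖𝓕 f‖_∞ ≤ ‖f‖_{A,1}` -/
  hFT_sup : ∀ f : ℝ → ℂ, MemW A 1 f → ∀ lam : ℝ,
    ‖FT f lam‖ ≤ wLpNorm A 1 f
  /-- the Hausdorff–Young inequality `‖𝓕 f‖_{c,p'} ≤ C ‖f‖_{A,p}` -/
  hHY : ∀ p p' : ℝ, 1 < p → p ≤ 2 → 1 / p + 1 / p' = 1 →
    ∃ C > (0 : ℝ), ∀ f : ℝ → ℂ, MemW A p f →
      (∫⁻ lam in Set.Ioi (0 : ℝ),
          ENNReal.ofReal (‖FT f lam‖ ^ p' * cden lam)) ^ (1 / p')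
        ≤ ENNReal.ofReal (C * wLpNorm A p f)
  /-- the Hardy–Littlewood inequality of Lemma 1 (with the piecewise weight
  `g(t) = t³` for `t ≤ k`, `g(t) = t^(2(α+1))` for `t > k`) -/
  hHL : ∀ p : ℝ, 1 < p → p ≤ 2 →
    ∃ C > (0 : ℝ), ∀ f : ℝ → ℂ, MemW A p f →
      ∫⁻ x in Set.Ioi (0 : ℝ),
          ENNReal.ofReal ((if x ≤ k then x ^ (3 : ℝ) else x ^ (2 * (α + 1))) ^ (p - 2) *
            ‖FT f x‖ ^ p * cden x)
        ≤ ENNReal.ofReal (C * wLpNorm A p f ^ p)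
  /-- the generalized translation operators -/
  τ : ℝ → (ℝ → ℂ) → ℝ → ℂ
  hτ_contract : ∀ p : ℝ, 1 ≤ p → ∀ (δ : ℝ) (f : ℝ → ℂ), MemW A p f →
    MemW A p (τ δ f) ∧ wLpNorm A p (τ δ f) ≤ wLpNorm A p f
  hτ_diff : ∀ p : ℝ, 1 ≤ p → ∀ (δ : ℝ) (f : ℝ → ℂ), MemW A p f →
    MemW A p (fun y => τ δ f y - f y)
  /-- the translation identity `𝓕(τ_δ f)(λ) = φ_λ(δ) 𝓕(f)(λ)` -/
  hτ_FT : ∀ p : ℝ, 1 ≤ p → p ≤ 2 → ∀ (δ : ℝ) (f : ℝ → ℂ), MemW A p f →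
    ∀ᵐ lam ∂(volume.restrict (Set.Ioi (0 : ℝ))),
      FT (τ δ f) lam = φ lam δ * FT f lam

/-- The modulus of continuity of first order, `ω_{A,p}(f)(δ) = ‖τ_δ f - f‖_{A,p}`. -/
noncomputable def JacobiHypergroup.omega (S : JacobiHypergroup) (p : ℝ)
    (f : ℝ → ℂ) (δ : ℝ) : ℝ :=
  wLpNorm S.A p (fun y => S.τ δ f y - f y)


/-!
Since `τ_δ f - f` is integrable, `‖𝓕(τ_δ f - f)‖_∞ ≤ ω_{A,1}(f)(δ)`, and by the translation
identity `𝓕(τ_δ f - f)(λ) = (φ_λ(δ) - 1) 𝓕(f)(λ)`. For `λ > 1/δ` the lower bound on the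
Jacobi functions gives `|1 - φ_λ(δ)| ≥ c₀`, so `|𝓕(f)(λ)| ≤ c₀⁻¹ ω_{A,1}(f)(δ)` there.
-/

namespace JacobiHypergroup

variable (S : JacobiHypergroup)

theorem c₀_le_norm_one_sub_φ {lam t : ℝ} (ht : 0 < t) (h : 1 ≤ |lam * t|) :
    S.c₀ ≤ ‖1 - S.φ lam t‖ := by
  have hmin : min 1 ((lam * t) ^ 2) = 1 := min_eq_left (one_le_sq_iff_one_le_abs _ |>.mpr h)
  simpa [hmin] using S.hφ_lower lam t ht

theorem FT_τ_sub_self {p : ℝ} (hp₁ : 1 ≤ p) (hp₂ : p ≤ 2) {f : ℝ → ℂ} (hf : MemW S.A p f)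
    (δ : ℝ) :
    ∀ᵐ lam ∂(volume.restrict (Ioi (0 : ℝ))),
      S.FT (fun y => S.τ δ f y - f y) lam = (S.φ lam δ - 1) * S.FT f lam := by
  filter_upwards [S.hτ_FT p hp₁ hp₂ δ f hf] with lam hlam
  rw [S.hFT_sub, hlam]
  ring

theorem norm_one_sub_φ_mul_norm_FT_le_omega {f : ℝ → ℂ} (hf : MemW S.A 1 f) (δ : ℝ) :
    ∀ᵐ lam ∂(volume.restrict (Ioi (0 : ℝ))),
      ‖1 - S.φ lam δ‖ * ‖S.FT f lam‖ ≤ S.omega 1 f δ := by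
  filter_upwards [S.FT_τ_sub_self le_rfl one_le_two hf δ] with lam hlam
  calc ‖1 - S.φ lam δ‖ * ‖S.FT f lam‖
      = ‖S.FT (fun y => S.τ δ f y - f y) lam‖ := by
        rw [hlam, norm_mul, norm_sub_rev]
    _ ≤ S.omega 1 f δ := S.hFT_sup _ (S.hτ_diff 1 le_rfl δ f hf) lam

theorem norm_FT_le_inv_c₀_mul_omega {f : ℝ → ℂ} (hf : MemW S.A 1 f) {δ : ℝ} (hδ : 0 < δ) :
    ∀ᵐ lam ∂(volume.restrict (Ioi (1 / δ))), ‖S.FT f lam‖ ≤ S.c₀⁻¹ * S.omega 1 f δ := by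
  have hsub : Ioi (1 / δ) ⊆ Ioi (0 : ℝ) := Ioi_subset_Ioi (by positivity)
  filter_upwards [ae_restrict_of_ae_restrict_of_subset hsub
      (S.norm_one_sub_φ_mul_norm_FT_le_omega hf δ), ae_restrict_mem measurableSet_Ioi]
    with lam hbound hlam
  have hlamδ : 1 ≤ |lam * δ| := by
    rw [mem_Ioi, div_lt_iff₀ hδ] at hlam
    exact le_abs.mpr (Or.inl hlam.le)
  rw [le_inv_mul_iff₀ S.hc₀]
  calc S.c₀ * ‖S.FT f lam‖ ≤ ‖1 - S.φ lam δ‖ * ‖S.FT f lam‖ := by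
        gcongr
        exact S.c₀_le_norm_one_sub_φ hδ hlamδ
    _ ≤ S.omega 1 f δ := hbound

end JacobiHypergroup

/-- **Quantitative Riemann–Lebesgue lemma, case p = 1** (Remark 3 (i)): for
`f ∈ L¹_A(ℝ₊)` on the Jacobi hypergroup, there exists `c > 0` such that for every
`δ > 0`, `ess sup_{x > 1/δ} |𝓕(f)(x)| ≤ c ω_{A,1}(f)(δ)`. -/
theorem riemann_lebesgue_p_eq_one (S : JacobiHypergroup) (f : ℝ → ℂ)
    (hf : MemW S.A 1 f) :
    ∃ c > (0 : ℝ), ∀ δ > (0 : ℝ),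
      essSup (fun x : ℝ => ENNReal.ofReal (‖S.FT f x‖))
          (volume.restrict (Set.Ioi (1 / δ)))
        ≤ ENNReal.ofReal (c * S.omega 1 f δ) :=
  ⟨S.c₀⁻¹, inv_pos.mpr S.hc₀, fun _ hδ => essSup_le_of_ae_le _
    ((S.norm_FT_le_inv_c₀_mul_omega hf hδ).mono fun _ h => ENNReal.ofReal_le_ofReal h)⟩
end

section
/- Estimate (10): Let 1 < p ≤ 2 with conjugate exponent p', and let f ∈ L^p_A(ℝ₊) on the Jacobi hypergroup. Then there exists a positive constant c such that for every δ > 0, δ² (∫₀^{1/δ} x^{2p'} |𝓕(f)(x)|^{p'} dx/|c(x)|²)^{1/p'} ≤ c ω_{A,p}(f)(δ). -/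
open MeasureTheory Set Filter

/-! For `0 < x < 1/δ` the character bound gives `|1 - φ_x(δ)| ≥ c₀ (xδ)²`, and
`𝓕(τ_δ f - f)(x) = (φ_x(δ) - 1) 𝓕(f)(x)`, so `c₀ δ² x² |𝓕(f)(x)| ≤ |𝓕(τ_δ f - f)(x)|` there.
Raising to the power `p'`, integrating against `dx/|c(x)|²` and applying Hausdorff–Young to
`τ_δ f - f ∈ L^p_A` bounds the left side by `(C/c₀) ‖τ_δ f - f‖_{A,p}`. -/

lemma setLIntegral_rpow_mul_rpow_inv_le_of_ae_le {α : Type*} [MeasurableSpace α]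
    {μ : Measure α} {s t : Set α} (hst : s ⊆ t) {q K : ℝ} (hq : 0 < q) (hK : 0 ≤ K)
    {F G w : α → ℝ} (hF : ∀ᵐ x ∂μ.restrict s, 0 ≤ F x) (hG : ∀ x, 0 ≤ G x)
    (hw : ∀ x, 0 ≤ w x) (hFG : ∀ᵐ x ∂μ.restrict s, F x ≤ K * G x) :
    (∫⁻ x in s, ENNReal.ofReal (F x ^ q * w x) ∂μ) ^ (1 / q)
      ≤ ENNReal.ofReal K * (∫⁻ x in t, ENNReal.ofReal (G x ^ q * w x) ∂μ) ^ (1 / q) := by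
  have hpow : ∀ᵐ x ∂μ.restrict s, ENNReal.ofReal (F x ^ q * w x)
      ≤ ENNReal.ofReal (K ^ q) * ENNReal.ofReal (G x ^ q * w x) := by
    filter_upwards [hF, hFG] with x hFx hFGx
    rw [← ENNReal.ofReal_mul (by positivity), ← mul_assoc, ← Real.mul_rpow hK (hG x)]
    gcongr
    exact hw x
  have hKq : ENNReal.ofReal (K ^ q) ^ (1 / q) = ENNReal.ofReal K := by
    rw [ENNReal.ofReal_rpow_of_nonneg (by positivity) (by positivity), ← Real.rpow_mul hK,
      mul_one_div_cancel hq.ne', Real.rpow_one]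
  calc (∫⁻ x in s, ENNReal.ofReal (F x ^ q * w x) ∂μ) ^ (1 / q)
      ≤ (ENNReal.ofReal (K ^ q) * ∫⁻ x in t, ENNReal.ofReal (G x ^ q * w x) ∂μ) ^ (1 / q) := by
        gcongr
        calc _ ≤ ∫⁻ x in s, ENNReal.ofReal (K ^ q) * ENNReal.ofReal (G x ^ q * w x) ∂μ :=
              lintegral_mono_ae hpow
          _ = ENNReal.ofReal (K ^ q) * ∫⁻ x in s, ENNReal.ofReal (G x ^ q * w x) ∂μ :=
              lintegral_const_mul' _ _ ENNReal.ofReal_ne_top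
          _ ≤ _ := by gcongr
    _ = _ := by rw [ENNReal.mul_rpow_of_nonneg _ _ (by positivity), hKq]

namespace JacobiHypergroup

variable (S : JacobiHypergroup)

lemma cden_nonneg (x : ℝ) : 0 ≤ S.cden x := by
  rcases le_or_gt |x| S.k with h | h
  · exact (mul_nonneg S.hk₁.le (Real.rpow_nonneg (abs_nonneg x) _)).trans (S.hcden_lo x h).1
  · exact (mul_nonneg S.hk₁.le (Real.rpow_nonneg (abs_nonneg x) _)).trans (S.hcden_hi x h).1

lemma c₀_mul_sq_le_norm_one_sub_φ {x δ : ℝ} (hx : 0 < x) (hδ : 0 < δ) (hxδ : x < 1 / δ) :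
    S.c₀ * (x * δ) ^ 2 ≤ ‖1 - S.φ x δ‖ := by
  have hxδ1 : x * δ < 1 := (lt_div_iff₀ hδ).mp hxδ
  have hmin : min 1 ((x * δ) ^ 2) = (x * δ) ^ 2 :=
    min_eq_right (by nlinarith [mul_pos hx hδ])
  simpa only [hmin] using S.hφ_lower x δ hδ

lemma ae_norm_FT_translate_sub {p δ : ℝ} (hp : 1 ≤ p) (hp2 : p ≤ 2) {f : ℝ → ℂ}
    (hf : MemW S.A p f) :
    ∀ᵐ x ∂volume.restrict (Ioi (0 : ℝ)),
      ‖S.FT (fun y => S.τ δ f y - f y) x‖ = ‖1 - S.φ x δ‖ * ‖S.FT f x‖ := by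
  filter_upwards [S.hτ_FT p hp hp2 δ f hf] with x hx
  rw [S.hFT_sub, hx, ← norm_mul, ← norm_neg]
  congr 1
  ring

lemma ae_sq_mul_norm_FT_le {p δ : ℝ} (hp : 1 ≤ p) (hp2 : p ≤ 2) (hδ : 0 < δ) {f : ℝ → ℂ}
    (hf : MemW S.A p f) :
    ∀ᵐ x ∂volume.restrict (Ioo (0 : ℝ) (1 / δ)),
      x ^ 2 * ‖S.FT f x‖ ≤ (S.c₀ * δ ^ 2)⁻¹ * ‖S.FT (fun y => S.τ δ f y - f y) x‖ := by
  filter_upwards [ae_restrict_of_ae_restrict_of_subset Ioo_subset_Ioi_self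
      (S.ae_norm_FT_translate_sub (δ := δ) hp hp2 hf), ae_restrict_mem measurableSet_Ioo]
    with x hnorm ⟨hx0, hx1⟩
  have hc : 0 < S.c₀ * δ ^ 2 := by have := S.hc₀; positivity
  rw [hnorm, le_inv_mul_iff₀ hc]
  calc S.c₀ * δ ^ 2 * (x ^ 2 * ‖S.FT f x‖) = S.c₀ * (x * δ) ^ 2 * ‖S.FT f x‖ := by ring
    _ ≤ ‖1 - S.φ x δ‖ * ‖S.FT f x‖ := by
      gcongr; exact S.c₀_mul_sq_le_norm_one_sub_φ hx0 hδ hx1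

end JacobiHypergroup

/-- **Estimate (10)**: for `1 < p ≤ 2` with conjugate exponent `p'` and
`f ∈ L^p_A(ℝ₊)` on the Jacobi hypergroup, there exists `c > 0` such that for every
`δ > 0`,
`δ² (∫₀^{1/δ} x^(2p') |𝓕(f)(x)|^(p') dx/|c(x)|²)^(1/p') ≤ c ω_{A,p}(f)(δ)`. -/
theorem estimate_ten (S : JacobiHypergroup) (p p' : ℝ) (hp : 1 < p) (hp2 : p ≤ 2)
    (hpp' : 1 / p + 1 / p' = 1) (f : ℝ → ℂ) (hf : MemW S.A p f) :
    ∃ c > (0 : ℝ), ∀ δ > (0 : ℝ),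
      ENNReal.ofReal (δ ^ 2) *
          (∫⁻ x in Set.Ioo (0 : ℝ) (1 / δ),
            ENNReal.ofReal (x ^ (2 * p') *
              ‖S.FT f x‖ ^ p' * S.cden x)) ^ (1 / p')
        ≤ ENNReal.ofReal (c * S.omega p f δ) := by
  obtain ⟨C, hC, hHY⟩ := S.hHY p p' hp hp2 hpp'
  have hc₀ := S.hc₀
  have hp' : 0 < p' := by
    have : 1 / p < 1 := (div_lt_one (by linarith)).mpr hp
    exact one_div_pos.mp (by linarith)
  refine ⟨C / S.c₀, by positivity, fun δ hδ => ?_⟩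
  set g : ℝ → ℂ := fun y => S.τ δ f y - f y
  have hintegrand : ∀ x ∈ Ioo (0 : ℝ) (1 / δ), ENNReal.ofReal (x ^ (2 * p') *
      ‖S.FT f x‖ ^ p' * S.cden x) = ENNReal.ofReal ((x ^ 2 * ‖S.FT f x‖) ^ p' * S.cden x) := by
    intro x hx
    rw [Real.mul_rpow (by positivity) (norm_nonneg _), Real.rpow_mul hx.1.le, Real.rpow_two]
  calc ENNReal.ofReal (δ ^ 2) * (∫⁻ x in Ioo (0 : ℝ) (1 / δ),
          ENNReal.ofReal (x ^ (2 * p') * ‖S.FT f x‖ ^ p' * S.cden x)) ^ (1 / p')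
      = ENNReal.ofReal (δ ^ 2) * (∫⁻ x in Ioo (0 : ℝ) (1 / δ),
          ENNReal.ofReal ((x ^ 2 * ‖S.FT f x‖) ^ p' * S.cden x)) ^ (1 / p') := by
        rw [setLIntegral_congr_fun measurableSet_Ioo hintegrand]
    _ ≤ ENNReal.ofReal (δ ^ 2) * (ENNReal.ofReal (S.c₀ * δ ^ 2)⁻¹ *
          (∫⁻ x in Ioi (0 : ℝ), ENNReal.ofReal (‖S.FT g x‖ ^ p' * S.cden x)) ^ (1 / p')) := by
        gcongr
        exact setLIntegral_rpow_mul_rpow_inv_le_of_ae_le Ioo_subset_Ioi_self hp'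
          (by positivity) (ae_of_all _ fun x => by positivity) (fun x => norm_nonneg _)
          S.cden_nonneg (S.ae_sq_mul_norm_FT_le hp.le hp2 hδ hf)
    _ ≤ ENNReal.ofReal (δ ^ 2) * (ENNReal.ofReal (S.c₀ * δ ^ 2)⁻¹ *
          ENNReal.ofReal (C * S.omega p f δ)) := by
        gcongr
        exact hHY g (S.hτ_diff p hp.le δ f hf)
    _ = ENNReal.ofReal (C / S.c₀ * S.omega p f δ) := by
        rw [← ENNReal.ofReal_mul (by positivity), ← ENNReal.ofReal_mul (by positivity)]
        congr 1
        field_simp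
end
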